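/- Let m ≥ 1 be an integer and λ a nonzero real number. Then the improper integral lim_{R→∞} ∫_0^R e^{iλ t^{m+1}} dt exists and equals Γ((m+2)/(m+1)) · |λ|^{−1/(m+1)} · e^{i·sgn(λ)·π/(2(m+1))}. Moreover, if m is even (so that m+1 is odd), then lim_{R→∞} ∫_{−R}^{R} e^{iλ t^{m+1}} dt = 2 cos(π/(2(m+1))) · Γ((m+2)/(m+1)) · |λ|^{−1/(m+1)}. -/

import Mathlib

open MeasureTheory Set Filter

open Real Complex intervalIntegral

noncomputable def fres (a : ℝ) : ℂ → ℂ := fun z => z ^ ((a : ℂ) - 1) * Complex.exp (Complex.I * z)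

lemma fres_norm {a : ℝ} {z : ℂ} (hz : z ≠ 0) :
    ‖fres a z‖ = ‖z‖ ^ (a - 1) * Real.exp (-z.im) := by
  simp only [fres, norm_mul, Complex.norm_cpow_of_ne_zero hz, Complex.norm_exp]
  have : ((a : ℂ) - 1).im = 0 := by simp
  have hre : ((a : ℂ) - 1).re = a - 1 := by simp
  rw [this, hre]
  simp [Complex.mul_re]

lemma fres_contAt {a : ℝ} {z : ℂ} (hz : z ∈ Complex.slitPlane) : ContinuousAt (fres a) z := by
  apply ContinuousAt.mul
  · exact continuousAt_cpow_const hz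
  · exact (Complex.continuous_exp.comp (continuous_const.mul continuous_id)).continuousAt

lemma fres_diffAt {a : ℝ} {z : ℂ} (hz : z ∈ Complex.slitPlane) : DifferentiableAt ℂ (fres a) z := by
  apply DifferentiableAt.mul
  · exact (differentiableAt_id.cpow (differentiableAt_const _) hz)
  · exact (Complex.differentiable_exp.differentiableAt).comp z ((differentiableAt_const _).mul differentiableAt_id)

lemma fres_contOn {a : ℝ} : ContinuousOn (fun t : ℝ => fres a t) (Ioi 0) := fun t ht =>
  ((fres_contAt (Or.inl (by simpa using ht))).comp Complex.continuous_ofReal.continuousAt).continuousWithinAt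

lemma fres_contOn_I {a : ℝ} : ContinuousOn (fun t : ℝ => fres a (Complex.I * t)) (Ioi 0) :=
  fun t ht => ((fres_contAt (Or.inr (by simpa [Complex.mul_im] using ne_of_gt ht))).comp
    (continuous_const.mul Complex.continuous_ofReal).continuousAt).continuousWithinAt

-- arc integral
noncomputable def arcI (a ρ : ℝ) : ℂ :=
  Complex.I • ∫ y : ℝ in (0:ℝ)..(Real.pi/2), fres a (ρ * Complex.exp (y * Complex.I)) * (ρ * Complex.exp (y * Complex.I))

lemma contour (a r R : ℝ) (hr : 0 < r) (hR : 0 < R) :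
    (∫ t in r..R, fres a t) - (∫ t in r..R, fres a (Complex.I * t)) * Complex.I
      + arcI a R - arcI a r = 0 := by
  have key := Complex.integral_boundary_rect_eq_zero_of_differentiableOn
    (fun w => fres a (Complex.exp w) * Complex.exp w)
    (Real.log r) ((Real.log R : ℂ) + (Real.pi/2) * Complex.I) (by
      intro w hw
      apply DifferentiableAt.differentiableWithinAt
      have him : w.im ∈ Icc (0:ℝ) (Real.pi/2) := by
        have := hw.2
        simp only [Complex.add_im, Complex.ofReal_im, Complex.mul_im, Complex.I_im, Complex.I_re,
          Complex.ofReal_re] at this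
        norm_num at this
        rwa [uIcc_of_le (by positivity)] at this
      have hslit : Complex.exp w ∈ Complex.slitPlane := by
        rcases eq_or_lt_of_le him.1 with h0 | h0
        · left
          rw [Complex.exp_re, ← h0]
          simp [Real.exp_pos]
        · right
          rw [Complex.exp_im]
          have : 0 < Real.sin w.im := Real.sin_pos_of_pos_of_lt_pi h0
            (lt_of_le_of_lt him.2 (by linarith [Real.pi_pos]))
          positivity
      exact ((fres_diffAt hslit).comp w Complex.differentiable_exp.differentiableAt).mul
        Complex.differentiable_exp.differentiableAt)
  simp only [Complex.add_re, Complex.ofReal_re, Complex.mul_re, Complex.I_re, Complex.I_im,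
    Complex.add_im, Complex.ofReal_im, Complex.mul_im] at key
  norm_num at key
  -- substitution lemma for the two horizontal sides
  have hsub : ∀ G : ℝ → ℂ, ContinuousOn G (Ioi 0) →
      (∫ x in Real.log r..Real.log R, Real.exp x • G (Real.exp x)) = ∫ t in r..R, G t := by
    intro G hG
    have := integral_comp_smul_deriv'' (f := Real.exp) (f' := Real.exp) (g := G)
      (a := Real.log r) (b := Real.log R)
      (Real.continuous_exp.continuousOn)
      (fun x _ => (Real.hasDerivAt_exp x).hasDerivWithinAt)
      (Real.continuous_exp.continuousOn)
      (hG.mono (by rintro _ ⟨x, _, rfl⟩; exact Real.exp_pos x))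
    rwa [Real.exp_log hr, Real.exp_log hR] at this
  have h1 : (∫ x in Real.log r..Real.log R, fres a (Complex.exp x) * Complex.exp x)
      = ∫ t in r..R, fres a t := by
    rw [← hsub (fun t : ℝ => fres a t) fres_contOn]
    apply intervalIntegral.integral_congr
    intro x _
    beta_reduce
    rw [Complex.real_smul, Complex.ofReal_exp, mul_comm]
  have h2 : (∫ x in Real.log r..Real.log R,
        fres a (Complex.exp (x + (Real.pi/2) * Complex.I)) * Complex.exp (x + (Real.pi/2) * Complex.I))
      = (∫ t in r..R, fres a (Complex.I * t)) * Complex.I := by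
    rw [← intervalIntegral.integral_mul_const]
    rw [← hsub (fun t : ℝ => fres a (Complex.I * t) * Complex.I)
      (fres_contOn_I.mul continuousOn_const)]
    apply intervalIntegral.integral_congr
    intro x _
    have h3 : Complex.exp (x + (Real.pi : ℂ)/2 * Complex.I) = Complex.exp x * Complex.I := by
      rw [Complex.exp_add]
      congr 1
      have := Complex.exp_mul_I ((Real.pi : ℂ)/2)
      rw [this]
      have c1 : Complex.cos ((Real.pi : ℂ)/2) = 0 := by
        rw [show ((Real.pi : ℂ)/2) = ((Real.pi/2 : ℝ) : ℂ) by push_cast; ring, ← Complex.ofReal_cos]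
        simp
      have s1 : Complex.sin ((Real.pi : ℂ)/2) = 1 := by
        rw [show ((Real.pi : ℂ)/2) = ((Real.pi/2 : ℝ) : ℂ) by push_cast; ring, ← Complex.ofReal_sin]
        simp
      rw [c1, s1, one_mul, zero_add]
    beta_reduce
    rw [h3, Complex.real_smul, Complex.ofReal_exp]
    ring
  have h4 : ∀ (ρ:ℝ), 0 < ρ → (Complex.I * ∫ y in (0:ℝ)..(Real.pi/2),
      fres a (Complex.exp (↑(Real.log ρ) + ↑y * Complex.I)) * Complex.exp (↑(Real.log ρ) + ↑y * Complex.I))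
      = arcI a ρ := by
    intro ρ hρ
    rw [arcI, smul_eq_mul]
    congr 1
    apply intervalIntegral.integral_congr
    intro y _
    beta_reduce
    rw [show Complex.exp (↑(Real.log ρ) + ↑y*Complex.I) = ↑ρ * Complex.exp (↑y*Complex.I) by
      rw [Complex.exp_add, ← Complex.ofReal_exp, Real.exp_log hρ]]
  rw [h1, h2, h4 R hR, h4 r hr] at key
  exact key

lemma arc_point_norm {a ρ : ℝ} (hρ : 0 < ρ) (y : ℝ) :
    ‖fres a (ρ * Complex.exp (y * Complex.I)) * (ρ * Complex.exp (y * Complex.I))‖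
      = ρ ^ a * Real.exp (-(ρ * Real.sin y)) := by
  have hz : (ρ : ℂ) * Complex.exp (y * Complex.I) ≠ 0 := by
    apply mul_ne_zero (by exact_mod_cast hρ.ne') (Complex.exp_ne_zero _)
  have habs : ‖(ρ:ℂ) * Complex.exp (y * Complex.I)‖ = ρ := by
    rw [norm_mul, Complex.norm_exp]
    simp [Complex.norm_of_nonneg hρ.le, hρ.le]
  have him : ((ρ:ℂ) * Complex.exp (y * Complex.I)).im = ρ * Real.sin y := by
    rw [Complex.mul_im]
    simp [Complex.exp_ofReal_mul_I_im]
  rw [norm_mul, fres_norm hz, habs, him,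
    show a = (a-1)+1 by ring, Real.rpow_add_one hρ.ne']
  ring

lemma arc_bound_small {a ρ : ℝ} (hρ : 0 < ρ) :
    ‖arcI a ρ‖ ≤ Real.pi/2 * ρ ^ a := by
  rw [arcI, norm_smul, Complex.norm_I, one_mul]
  have key := intervalIntegral.norm_integral_le_of_norm_le_const (C := ρ ^ a)
    (a := (0:ℝ)) (b := Real.pi/2)
    (f := fun y => fres a (ρ * Complex.exp (y * Complex.I)) * (ρ * Complex.exp (y * Complex.I)))
    (fun y hy => by
      rw [arc_point_norm hρ]
      rw [uIoc_of_le (by positivity)] at hy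
      have hsin : 0 ≤ Real.sin y := Real.sin_nonneg_of_nonneg_of_le_pi hy.1.le
        (hy.2.trans (by linarith [Real.pi_pos]))
      calc ρ ^ a * Real.exp (-(ρ * Real.sin y)) ≤ ρ ^ a * 1 := by
            gcongr
            rw [Real.exp_le_one_iff]
            simp only [neg_nonpos]
            positivity
        _ = ρ ^ a := by ring)
  calc ‖∫ y in (0:ℝ)..(Real.pi/2),
      fres a (ρ * Complex.exp (y * Complex.I)) * (ρ * Complex.exp (y * Complex.I))‖
      ≤ ρ ^ a * |Real.pi/2 - 0| := key
    _ = Real.pi/2 * ρ ^ a := by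
        rw [show |Real.pi/2 - 0| = Real.pi/2 by
          rw [sub_zero]; exact abs_of_nonneg (by positivity)]
        ring

lemma arc_bound_large {a ρ : ℝ} (hρ : 0 < ρ) :
    ‖arcI a ρ‖ ≤ Real.pi/2 * ρ ^ (a - 1) := by
  rw [arcI, norm_smul, Complex.norm_I, one_mul]
  set c : ℝ := 2*ρ/Real.pi with hc
  have hcpos : 0 < c := by
    rw [hc]; positivity
  have h1 : ‖∫ y in (0:ℝ)..(Real.pi/2),
      fres a (ρ * Complex.exp (y * Complex.I)) * (ρ * Complex.exp (y * Complex.I))‖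
      ≤ ∫ y in (0:ℝ)..(Real.pi/2),
        ‖fres a (ρ * Complex.exp (y * Complex.I)) * (ρ * Complex.exp (y * Complex.I))‖ :=
    intervalIntegral.norm_integral_le_integral_norm (by positivity)
  have heq : (∫ y in (0:ℝ)..(Real.pi/2),
        ‖fres a (ρ * Complex.exp (y * Complex.I)) * (ρ * Complex.exp (y * Complex.I))‖)
      = ∫ y in (0:ℝ)..(Real.pi/2), ρ ^ a * Real.exp (-(ρ * Real.sin y)) :=
    intervalIntegral.integral_congr (fun y _ => arc_point_norm hρ y)
  have h2 : (∫ y in (0:ℝ)..(Real.pi/2), ρ ^ a * Real.exp (-(ρ * Real.sin y)))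
      ≤ ∫ y in (0:ℝ)..(Real.pi/2), ρ ^ a * Real.exp (-(c * y)) := by
    apply intervalIntegral.integral_mono_on (by positivity)
    · apply ContinuousOn.intervalIntegrable; fun_prop
    · apply ContinuousOn.intervalIntegrable; fun_prop
    · intro y hy
      have hkey : c * y ≤ ρ * Real.sin y := by
        rw [hc]
        calc 2*ρ/Real.pi * y = ρ * (2/Real.pi * y) := by ring
          _ ≤ ρ * Real.sin y := mul_le_mul_of_nonneg_left (Real.mul_le_sin hy.1 hy.2) hρ.le
      exact mul_le_mul_of_nonneg_left (Real.exp_le_exp.mpr (by linarith)) (by positivity)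
  have h3 : (∫ y in (0:ℝ)..(Real.pi/2), ρ ^ a * Real.exp (-(c * y)))
      = ρ ^ a * ((1 - Real.exp (-ρ))/c) := by
    rw [intervalIntegral.integral_const_mul]
    congr 1
    have : ∀ y : ℝ, Real.exp (-(c * y)) = Real.exp ((-c) * y) := by intro y; ring_nf
    rw [intervalIntegral.integral_congr (fun y _ => this y),
      intervalIntegral.integral_comp_mul_left Real.exp (neg_ne_zero.mpr hcpos.ne'),
      integral_exp]
    rw [smul_eq_mul]
    rw [show -c * (Real.pi/2) = -ρ by rw [hc]; field_simp]
    rw [mul_zero, Real.exp_zero, inv_neg]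
    ring
  have h4 : ρ ^ a * ((1 - Real.exp (-ρ))/c) ≤ Real.pi/2 * ρ ^ (a-1) := by
    have : (1 - Real.exp (-ρ))/c ≤ 1/c := by
      gcongr
      · linarith [Real.exp_pos (-ρ)]
    calc ρ ^ a * ((1 - Real.exp (-ρ))/c) ≤ ρ ^ a * (1/c) := by gcongr
      _ = Real.pi/2 * ρ ^ (a-1) := by
          rw [hc, Real.rpow_sub hρ, Real.rpow_one]
          field_simp
  calc ‖∫ y in (0:ℝ)..(Real.pi/2),
      fres a (ρ * Complex.exp (y * Complex.I)) * (ρ * Complex.exp (y * Complex.I))‖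
      ≤ _ := h1
    _ = _ := heq
    _ ≤ _ := h2
    _ = _ := h3
    _ ≤ _ := h4

lemma integrable_of_rpow_bound {F : ℝ → ℂ} {a R : ℝ} (ha : 0 < a) (hR : 0 ≤ R)
    (hc : ContinuousOn F (Ioi 0))
    (hb : ∀ t ∈ Ioc (0:ℝ) R, ‖F t‖ ≤ t ^ (a - 1)) :
    IntervalIntegrable F volume 0 R := by
  rw [intervalIntegrable_iff_integrableOn_Ioc_of_le hR]
  have hg : IntegrableOn (fun t : ℝ => t ^ (a - 1)) (Ioc 0 R) :=
    (intervalIntegral.intervalIntegrable_rpow' (a := 0) (b := R) (r := a - 1) (by linarith)).1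
  apply Integrable.mono hg
  · exact (hc.mono Ioc_subset_Ioi_self).aestronglyMeasurable measurableSet_Ioc
  · rw [ae_restrict_iff' measurableSet_Ioc]
    filter_upwards with t ht
    rw [Real.norm_eq_abs, _root_.abs_of_nonneg (Real.rpow_nonneg ht.1.le _)]
    exact hb t ht

lemma tendsto_small_cut {F : ℝ → ℂ} {a : ℝ} (ha : 0 < a)
    (hc : ContinuousOn F (Ioi 0))
    (hb : ∀ t ∈ Ioi (0:ℝ), ‖F t‖ ≤ t ^ (a - 1)) :
    Tendsto (fun r => ∫ t in (0:ℝ)..r, F t) (nhdsWithin 0 (Ioi 0)) (nhds 0) := by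
  apply squeeze_zero_norm' (a := fun r => r ^ a / a)
  · filter_upwards [self_mem_nhdsWithin] with r (hr : 0 < r)
    have hbound := intervalIntegral.norm_integral_le_abs_of_norm_le
      (μ := volume) (a := (0:ℝ)) (b := r) (f := F) (g := fun t => t ^ (a - 1)) ?_ ?_
    · refine hbound.trans ?_
      rw [integral_rpow (Or.inl (by linarith))]
      rw [sub_add_cancel, Real.zero_rpow ha.ne', sub_zero, _root_.abs_of_nonneg (by positivity)]
    · rw [uIoc_of_le hr.le, ae_restrict_iff' measurableSet_Ioc]
      filter_upwards with t ht
      exact hb t ht.1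
    · exact intervalIntegral.intervalIntegrable_rpow' (by linarith)
  · have h0 : Tendsto (fun r : ℝ => r ^ a) (nhdsWithin 0 (Ioi 0)) (nhds 0) := by
      have := (Real.continuousAt_rpow_const 0 a (Or.inr ha.le)).tendsto
      rw [Real.zero_rpow ha.ne'] at this
      exact this.mono_left nhdsWithin_le_nhds
    simpa using h0.div_const a

lemma fres_I_eq {a : ℝ} (ha1 : a ≠ 1) {t : ℝ} (ht : 0 ≤ t) :
    fres a (Complex.I * t) * Complex.I
      = Complex.exp (Complex.I * (Real.pi * a / 2)) * ((t ^ (a-1) * Real.exp (-t) : ℝ) : ℂ) := by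
  have hane : (a : ℂ) - 1 ≠ 0 := by
    simpa [sub_eq_zero] using fun h => ha1 (by exact_mod_cast h)
  rcases eq_or_lt_of_le ht with h0 | ht'
  · rw [fres, ← h0]
    norm_num
    rw [Complex.zero_cpow hane, Real.zero_rpow (sub_ne_zero.mpr ha1)]
    norm_num
  · have hz : ((t:ℂ) * Complex.I) ≠ 0 :=
      mul_ne_zero (Complex.ofReal_ne_zero.mpr ht'.ne') Complex.I_ne_zero
    have hcomm : Complex.I * (t:ℂ) = (t:ℂ) * Complex.I := mul_comm _ _
    have habs : ‖(t:ℂ) * Complex.I‖ = t := by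
      simp [Complex.norm_of_nonneg ht, ht]
    have harg : Complex.arg ((t:ℂ) * Complex.I) = Real.pi/2 := by
      rw [Complex.arg_real_mul _ ht', Complex.arg_I]
    have hlog : Complex.log ((t:ℂ) * Complex.I) = ((Real.log t : ℝ) : ℂ) + ((Real.pi/2 : ℝ) : ℂ) * Complex.I := by
      apply Complex.ext
      · simp [Complex.log_re, habs]
      · simp [Complex.log_im, harg]
    have hcpow : ((t:ℂ) * Complex.I) ^ ((a:ℂ) - 1)
        = ((t ^ (a-1) : ℝ) : ℂ) * Complex.exp (((Real.pi/2 : ℝ) : ℂ) * ((a:ℂ)-1) * Complex.I) := by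
      rw [Complex.cpow_def_of_ne_zero hz, hlog, add_mul, Complex.exp_add]
      congr 1
      · rw [Real.rpow_def_of_pos ht', Complex.ofReal_exp]
        congr 1
        push_cast
        ring
      · congr 1
        ring
    have hexp : Complex.exp (Complex.I * ((t:ℂ) * Complex.I)) = ((Real.exp (-t) : ℝ) : ℂ) := by
      rw [Complex.ofReal_exp]
      congr 1
      push_cast
      rw [show Complex.I * ((t:ℂ) * Complex.I) = Complex.I * Complex.I * t by ring, Complex.I_mul_I]
      ring
    have hI : Complex.exp (((Real.pi/2 : ℝ) : ℂ) * Complex.I) = Complex.I := by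
      rw [Complex.exp_mul_I, ← Complex.ofReal_cos, ← Complex.ofReal_sin]
      simp
    have hIexp : Complex.exp (((Real.pi/2 : ℝ) : ℂ) * ((a:ℂ)-1) * Complex.I) * Complex.I
        = Complex.exp (Complex.I * ((Real.pi : ℂ) * a / 2)) := by
      nth_rewrite 2 [← hI]
      rw [← Complex.exp_add]
      congr 1
      push_cast
      ring
    rw [fres, hcomm, hcpow, hexp]
    calc ((t ^ (a-1) : ℝ) : ℂ) * Complex.exp (((Real.pi/2 : ℝ) : ℂ) * ((a:ℂ)-1) * Complex.I)
          * ((Real.exp (-t) : ℝ) : ℂ) * Complex.I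
        = (Complex.exp (((Real.pi/2 : ℝ) : ℂ) * ((a:ℂ)-1) * Complex.I) * Complex.I)
          * (((t ^ (a-1) : ℝ) : ℂ) * ((Real.exp (-t) : ℝ) : ℂ)) := by ring
      _ = Complex.exp (Complex.I * ((Real.pi : ℂ) * a / 2)) * ((t ^ (a-1) * Real.exp (-t) : ℝ) : ℂ) := by
          rw [hIexp]
          push_cast
          ring
      _ = _ := by push_cast; ring

lemma fres_norm_real {a : ℝ} {t : ℝ} (ht : 0 < t) : ‖fres a (t:ℂ)‖ = t ^ (a-1) := by
  rw [fres_norm (by exact_mod_cast ht.ne')]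
  simp [Complex.norm_of_nonneg ht.le, abs_of_pos ht]

lemma fres_norm_I {a : ℝ} {t : ℝ} (ht : 0 < t) :
    ‖fres a (Complex.I * t)‖ = t ^ (a-1) * Real.exp (-t) := by
  rw [fres_norm (mul_ne_zero Complex.I_ne_zero (by exact_mod_cast ht.ne'))]
  have h1 : ‖Complex.I * (t:ℂ)‖ = t := by
    simp [Complex.norm_of_nonneg ht.le, ht.le]
  have h2 : (Complex.I * (t:ℂ)).im = t := by simp
  rw [h1, h2]

lemma halfline_eq {a : ℝ} (ha : 0 < a) (ha1 : a < 1) {R : ℝ} (hR : 0 < R) :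
    (∫ t in (0:ℝ)..R, fres a t)
      = Complex.exp (Complex.I * (Real.pi * a / 2)) *
          (∫ t in (0:ℝ)..R, ((t ^ (a-1) * Real.exp (-t) : ℝ) : ℂ)) - arcI a R := by
  set F : ℝ → ℂ := fun t => fres a t with hF
  set G : ℝ → ℂ := fun t => fres a (Complex.I * t) with hG
  have hbF : ∀ t ∈ Ioi (0:ℝ), ‖F t‖ ≤ t ^ (a-1) := fun t ht => le_of_eq (fres_norm_real ht)
  have hbG : ∀ t ∈ Ioi (0:ℝ), ‖G t‖ ≤ t ^ (a-1) := fun t ht => by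
    rw [hG]
    beta_reduce
    rw [fres_norm_I ht]
    nth_rewrite 2 [show t ^ (a-1) = t ^ (a-1) * 1 by ring]
    gcongr
    · exact Real.rpow_nonneg (le_of_lt ht) _
    · rw [Real.exp_le_one_iff]
      simp only [neg_nonpos]
      exact le_of_lt ht
  have hFi : IntervalIntegrable F volume 0 R :=
    integrable_of_rpow_bound ha hR.le fres_contOn (fun t ht => hbF t ht.1)
  have hGi : IntervalIntegrable G volume 0 R :=
    integrable_of_rpow_bound ha hR.le fres_contOn_I (fun t ht => hbG t ht.1)
  set l : Filter ℝ := nhdsWithin 0 (Ioi 0) with hl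
  have hev : ∀ᶠ r in l, r ∈ Ioo (0:ℝ) R :=
    Ioo_mem_nhdsGT_of_mem (by constructor <;> simp [hR])
  -- limits of the three pieces
  have T1 : Tendsto (fun r => ∫ t in r..R, F t) l (nhds (∫ t in (0:ℝ)..R, F t)) := by
    have := (tendsto_const_nhds (x := ∫ t in (0:ℝ)..R, F t) (f := l)).sub
      (tendsto_small_cut ha fres_contOn hbF)
    rw [sub_zero] at this
    apply this.congr'
    filter_upwards [hev] with r hr
    have h1 : IntervalIntegrable F volume 0 r :=
      hFi.mono_set (by rw [uIcc_of_le hr.1.le, uIcc_of_le hR.le]; exact Icc_subset_Icc le_rfl hr.2.le)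
    have h2 : IntervalIntegrable F volume r R :=
      hFi.mono_set (by rw [uIcc_of_le hr.2.le, uIcc_of_le hR.le]; exact Icc_subset_Icc hr.1.le le_rfl)
    rw [← intervalIntegral.integral_add_adjacent_intervals h1 h2]
    ring
  have T2 : Tendsto (fun r => ∫ t in r..R, G t) l (nhds (∫ t in (0:ℝ)..R, G t)) := by
    have := (tendsto_const_nhds (x := ∫ t in (0:ℝ)..R, G t) (f := l)).sub
      (tendsto_small_cut ha fres_contOn_I hbG)
    rw [sub_zero] at this
    apply this.congr'
    filter_upwards [hev] with r hr
    have h1 : IntervalIntegrable G volume 0 r :=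
      hGi.mono_set (by rw [uIcc_of_le hr.1.le, uIcc_of_le hR.le]; exact Icc_subset_Icc le_rfl hr.2.le)
    have h2 : IntervalIntegrable G volume r R :=
      hGi.mono_set (by rw [uIcc_of_le hr.2.le, uIcc_of_le hR.le]; exact Icc_subset_Icc hr.1.le le_rfl)
    rw [← intervalIntegral.integral_add_adjacent_intervals h1 h2]
    ring
  have T3 : Tendsto (fun r => arcI a r) l (nhds 0) := by
    apply squeeze_zero_norm' (a := fun r => Real.pi/2 * r ^ a)
    · filter_upwards [self_mem_nhdsWithin] with r (hr : 0 < r)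
      exact arc_bound_small hr
    · have h0 : Tendsto (fun r : ℝ => r ^ a) l (nhds 0) := by
        have := (Real.continuousAt_rpow_const 0 a (Or.inr ha.le)).tendsto
        rw [Real.zero_rpow ha.ne'] at this
        exact this.mono_left nhdsWithin_le_nhds
      simpa using h0.const_mul (Real.pi/2)
  have Tall : Tendsto (fun r => (∫ t in r..R, F t) - (∫ t in r..R, G t) * Complex.I
      + arcI a R - arcI a r) l
      (nhds ((∫ t in (0:ℝ)..R, F t) - (∫ t in (0:ℝ)..R, G t) * Complex.I + arcI a R - 0)) :=
    (((T1.sub (T2.mul_const Complex.I)).add tendsto_const_nhds).sub T3)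
  have Tzero : Tendsto (fun r => (∫ t in r..R, F t) - (∫ t in r..R, G t) * Complex.I
      + arcI a R - arcI a r) l (nhds 0) := by
    apply Tendsto.congr' _ (tendsto_const_nhds (x := (0:ℂ)))
    filter_upwards [hev] with r hr
    exact (contour a r R hr.1 hR).symm
  have hkey : (∫ t in (0:ℝ)..R, F t) - (∫ t in (0:ℝ)..R, G t) * Complex.I + arcI a R - 0 = 0 :=
    tendsto_nhds_unique Tall Tzero
  have hrot : (∫ t in (0:ℝ)..R, G t) * Complex.I
      = Complex.exp (Complex.I * (Real.pi * a / 2)) *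
        (∫ t in (0:ℝ)..R, ((t ^ (a-1) * Real.exp (-t) : ℝ) : ℂ)) := by
    rw [← intervalIntegral.integral_mul_const, ← intervalIntegral.integral_const_mul]
    apply intervalIntegral.integral_congr
    intro t htt
    rw [uIcc_of_le hR.le] at htt
    exact fres_I_eq ha1.ne htt.1
  rw [hrot] at hkey
  linear_combination hkey

lemma halfline_tendsto {a : ℝ} (ha : 0 < a) (ha1 : a < 1) :
    Tendsto (fun R : ℝ => ∫ t in (0:ℝ)..R, fres a t) atTop
      (nhds (Complex.exp (Complex.I * (Real.pi * a / 2)) * ((Real.Gamma a : ℝ) : ℂ))) := by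
  have hint : IntegrableOn (fun t : ℝ => t ^ (a-1) * Real.exp (-t)) (Ioi 0) :=
    (Real.GammaIntegral_convergent ha).congr_fun (fun x _ => mul_comm _ _) measurableSet_Ioi
  have hval : (∫ x in Ioi (0:ℝ), x ^ (a-1) * Real.exp (-x)) = Real.Gamma a := by
    rw [Real.Gamma_eq_integral ha]
    apply setIntegral_congr_fun measurableSet_Ioi
    intro x _
    exact mul_comm _ _
  have hGamma : Tendsto (fun R : ℝ => ∫ t in (0:ℝ)..R, (t ^ (a-1) * Real.exp (-t) : ℝ))
      atTop (nhds (Real.Gamma a)) := by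
    have := intervalIntegral_tendsto_integral_Ioi 0 hint tendsto_id
    rwa [hval] at this
  have hGammaC : Tendsto (fun R : ℝ => ∫ t in (0:ℝ)..R, ((t ^ (a-1) * Real.exp (-t) : ℝ) : ℂ))
      atTop (nhds ((Real.Gamma a : ℝ) : ℂ)) := by
    have := (Complex.continuous_ofReal.tendsto (Real.Gamma a)).comp hGamma
    apply this.congr
    intro R
    exact (intervalIntegral.integral_ofReal).symm
  have harc : Tendsto (fun R : ℝ => arcI a R) atTop (nhds 0) := by
    apply squeeze_zero_norm' (a := fun R : ℝ => Real.pi/2 * R ^ (a-1))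
    · filter_upwards [eventually_gt_atTop (0:ℝ)] with R hR
      exact arc_bound_large hR
    · have h0 : Tendsto (fun R : ℝ => R ^ (a-1)) atTop (nhds 0) := by
        have := tendsto_rpow_neg_atTop (y := 1 - a) (by linarith)
        apply this.congr
        intro R
        norm_num
      simpa using h0.const_mul (Real.pi/2)
  have := (hGammaC.const_mul (Complex.exp (Complex.I * (Real.pi * a / 2)))).sub harc
  rw [sub_zero] at this
  apply this.congr'
  filter_upwards [eventually_gt_atTop (0:ℝ)] with R hR
  exact (halfline_eq ha ha1 hR).symm

lemma tendsto_lower_cut {F : ℝ → ℂ} {a : ℝ} (ha : 0 < a) {R : ℝ} (hR : 0 < R)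
    (hc : ContinuousOn F (Ioi 0)) (hb : ∀ t ∈ Ioi (0:ℝ), ‖F t‖ ≤ t ^ (a-1)) :
    Tendsto (fun r => ∫ t in r..R, F t) (nhdsWithin 0 (Ioi 0)) (nhds (∫ t in (0:ℝ)..R, F t)) := by
  have hFi : IntervalIntegrable F volume 0 R :=
    integrable_of_rpow_bound ha hR.le hc (fun t ht => hb t ht.1)
  have := (tendsto_const_nhds (x := ∫ t in (0:ℝ)..R, F t) (f := nhdsWithin 0 (Ioi 0))).sub
    (tendsto_small_cut ha hc hb)
  rw [sub_zero] at this
  apply this.congr'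
  filter_upwards [Ioo_mem_nhdsGT_of_mem (Set.mem_Ico.mpr ⟨le_refl 0, hR⟩)] with r hr
  have h1 : IntervalIntegrable F volume 0 r :=
    hFi.mono_set (by rw [uIcc_of_le hr.1.le, uIcc_of_le hR.le]; exact Icc_subset_Icc le_rfl hr.2.le)
  have h2 : IntervalIntegrable F volume r R :=
    hFi.mono_set (by rw [uIcc_of_le hr.2.le, uIcc_of_le hR.le]; exact Icc_subset_Icc hr.1.le le_rfl)
  rw [← intervalIntegral.integral_add_adjacent_intervals h1 h2]
  ring

lemma subst_eq {m : ℕ} {lam : ℝ} (hlam : 0 < lam) {R : ℝ} (hR : 0 < R) :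
    (∫ t in (0:ℝ)..R, Complex.exp (Complex.I * ((lam:ℂ) * (t:ℂ) ^ (m+1))))
      = ((((m:ℝ)+1)⁻¹ * lam ^ (-((m:ℝ)+1)⁻¹) : ℝ) : ℂ) *
          ∫ u in (0:ℝ)..(lam * R ^ (m+1)), fres (((m:ℝ)+1)⁻¹) u := by
  set a : ℝ := ((m:ℝ)+1)⁻¹ with hadef
  have ham : (0:ℝ) < (m:ℝ)+1 := by positivity
  have ha : 0 < a := by positivity
  set H : ℝ → ℂ := fun t => Complex.exp (Complex.I * ((lam:ℂ) * (t:ℂ) ^ (m+1))) with hHdef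
  set X : ℝ := lam * R ^ (m+1) with hXdef
  have hX : 0 < X := by positivity
  have hHc : Continuous H := by
    apply Complex.continuous_exp.comp
    fun_prop
  set c : ℝ := a * lam ^ (-a) with hcdef
  -- step 1 : substitution identity for r > 0
  have step1 : ∀ r ∈ Ioo (0:ℝ) R, (∫ t in r..R, H t)
      = (c:ℂ) * ∫ u in (lam * r ^ (m+1))..X, fres a u := by
    intro r hr
    have key := integral_comp_smul_deriv'' (a := r) (b := R)
      (f := fun t : ℝ => lam * t ^ (m+1))
      (f' := fun t : ℝ => lam * ((m+1) * t ^ m))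
      (g := fun u : ℝ => (c:ℂ) * fres a u)
      (by fun_prop)
      (fun x _ => (((hasDerivAt_pow (m+1) x).const_mul lam).congr_deriv (by
        norm_num)).hasDerivWithinAt)
      (by fun_prop)
      ?contg
    case contg =>
      apply (continuousOn_const.mul fres_contOn).mono
      rintro _ ⟨t, htt, rfl⟩
      rw [uIcc_of_le hr.2.le] at htt
      have htpos : 0 < t := lt_of_lt_of_le hr.1 htt.1
      exact mem_Ioi.mpr (by positivity)
    simp only [Function.comp] at key
    beta_reduce at key
    rw [hXdef, ← intervalIntegral.integral_const_mul, ← key]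
    apply intervalIntegral.integral_congr
    intro t htt
    rw [uIcc_of_le hr.2.le] at htt
    have ht : 0 < t := lt_of_lt_of_le hr.1 htt.1
    have hY : (0:ℝ) ≤ lam * t ^ (m+1) := by positivity
    -- rewrite fres at the real point
    have hfres : fres a ((lam * t ^ (m+1) : ℝ) : ℂ)
        = (((lam * t ^ (m+1)) ^ (a-1) : ℝ) : ℂ) *
            Complex.exp (Complex.I * ((lam * t ^ (m+1) : ℝ) : ℂ)) := by
      rw [fres]
      congr 1
      rw [show ((a:ℂ) - 1) = ((a - 1 : ℝ) : ℂ) by push_cast; ring, ← Complex.ofReal_cpow hY]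
    have h1 : ((m:ℝ)+1) * a = 1 := mul_inv_cancel₀ ham.ne'
    have h2 : ((m:ℝ)+1) * (a-1) = -(m:ℝ) := by
      rw [mul_sub, h1]; ring
    have e1 : (lam * t ^ (m+1)) ^ (a-1) = lam ^ (a-1) * t ^ (((m:ℝ)+1) * (a-1)) := by
      rw [Real.mul_rpow hlam.le (by positivity), ← Real.rpow_natCast t (m+1),
        ← Real.rpow_mul ht.le]
      norm_num
    have hlp : lam * lam ^ (-a) * lam ^ (a-1) = 1 := by
      rw [show lam * lam ^ (-a) * lam ^ (a-1)
          = lam ^ (1:ℝ) * lam ^ (-a) * lam ^ (a-1) by rw [Real.rpow_one],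
        ← Real.rpow_add hlam, ← Real.rpow_add hlam,
        show (1:ℝ) + -a + (a-1) = 0 by ring, Real.rpow_zero]
    have htp : t ^ m * t ^ (-(m:ℝ)) = 1 := by
      rw [← Real.rpow_natCast t m, ← Real.rpow_add ht,
        show (m:ℝ) + -(m:ℝ) = 0 by ring, Real.rpow_zero]
    have hcoef : lam * ((m+1) * t ^ m) * (c * (lam * t ^ (m+1)) ^ (a-1)) = 1 := by
      rw [e1, h2, hcdef]
      calc lam * ((m+1) * t ^ m) * (a * lam ^ (-a) * (lam ^ (a-1) * t ^ (-(m:ℝ))))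
          = (((m:ℝ)+1) * a) * (lam * lam ^ (-a) * lam ^ (a-1)) * (t ^ m * t ^ (-(m:ℝ))) := by
            push_cast; ring
        _ = 1 := by rw [h1, hlp, htp]; ring
    symm
    show (fun t : ℝ => lam * ((m+1) * t ^ m)) t • ((c:ℂ) * fres a ((fun t : ℝ => lam * t ^ (m+1)) t)) = H t
    beta_reduce
    rw [hfres, hHdef]
    beta_reduce
    rw [Complex.real_smul]
    rw [show ((lam:ℂ) * (t:ℂ) ^ (m+1)) = ((lam * t ^ (m+1) : ℝ) : ℂ) by push_cast; ring]
    calc ((lam * ((m+1) * t ^ m) : ℝ) : ℂ) * ((c:ℂ) *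
          ((((lam * t ^ (m+1)) ^ (a-1) : ℝ) : ℂ) *
            Complex.exp (Complex.I * ((lam * t ^ (m+1) : ℝ) : ℂ))))
        = (((lam * ((m+1) * t ^ m) * (c * (lam * t ^ (m+1)) ^ (a-1)) : ℝ)) : ℂ) *
            Complex.exp (Complex.I * ((lam * t ^ (m+1) : ℝ) : ℂ)) := by push_cast; ring
      _ = Complex.exp (Complex.I * ((lam * t ^ (m+1) : ℝ) : ℂ)) := by
          rw [hcoef]; push_cast; ring
  -- step 2 : take r → 0⁺
  have TL : Tendsto (fun r => ∫ t in r..R, H t) (nhdsWithin 0 (Ioi 0))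
      (nhds (∫ t in (0:ℝ)..R, H t)) := by
    have hprim : Continuous (fun r : ℝ => ∫ t in (0:ℝ)..r, H t) :=
      intervalIntegral.continuous_primitive (fun x y => hHc.intervalIntegrable x y) 0
    have h0 : Tendsto (fun r : ℝ => ∫ t in (0:ℝ)..r, H t) (nhdsWithin 0 (Ioi 0)) (nhds 0) := by
      have := (hprim.tendsto 0).mono_left (nhdsWithin_le_nhds (s := Ioi (0:ℝ)))
      simpa using this
    have := (tendsto_const_nhds (x := ∫ t in (0:ℝ)..R, H t)
      (f := nhdsWithin 0 (Ioi 0))).sub h0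
    rw [sub_zero] at this
    apply this.congr
    intro r
    rw [intervalIntegral.integral_interval_sub_left (hHc.intervalIntegrable 0 R)
      (hHc.intervalIntegrable 0 r)]
  have hδ : Tendsto (fun r : ℝ => lam * r ^ (m+1)) (nhdsWithin 0 (Ioi 0))
      (nhdsWithin 0 (Ioi 0)) := by
    rw [tendsto_nhdsWithin_iff]
    constructor
    · have hcont : Continuous (fun r : ℝ => lam * r ^ (m+1)) := by fun_prop
      have := (hcont.tendsto 0).mono_left (nhdsWithin_le_nhds (s := Ioi (0:ℝ)))
      simpa using this
    · filter_upwards [self_mem_nhdsWithin] with r (hr : 0 < r)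
      exact mem_Ioi.mpr (by positivity)
  have TRinner : Tendsto (fun s => ∫ u in s..X, fres a u) (nhdsWithin 0 (Ioi 0))
      (nhds (∫ u in (0:ℝ)..X, fres a u)) :=
    tendsto_lower_cut ha hX fres_contOn (fun t ht => le_of_eq (fres_norm_real ht))
  have TR : Tendsto (fun r => (c:ℂ) * ∫ u in (lam * r ^ (m+1))..X, fres a u)
      (nhdsWithin 0 (Ioi 0)) (nhds ((c:ℂ) * ∫ u in (0:ℝ)..X, fres a u)) :=
    ((TRinner.comp hδ).const_mul _)
  have := tendsto_nhds_unique (TL.congr' (by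
    filter_upwards [Ioo_mem_nhdsGT_of_mem (Set.mem_Ico.mpr ⟨le_refl 0, hR⟩)] with r hr
    exact step1 r hr)) TR
  rw [this]

lemma main_pos {m : ℕ} (hm : 1 ≤ m) {lam : ℝ} (hlam : 0 < lam) :
    Tendsto (fun R : ℝ => ∫ t in (0:ℝ)..R, Complex.exp (Complex.I * ((lam:ℂ) * (t:ℂ) ^ (m+1))))
      atTop (nhds (((Real.Gamma (((m:ℝ)+2)/((m:ℝ)+1)) * lam ^ (-(1:ℝ)/((m:ℝ)+1)) : ℝ) : ℂ) *
        Complex.exp (Complex.I * (((Real.pi / (2*((m:ℝ)+1)) : ℝ)) : ℂ)))) := by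
  set a : ℝ := ((m:ℝ)+1)⁻¹ with hadef
  have ham : (0:ℝ) < (m:ℝ)+1 := by positivity
  have ha : 0 < a := by positivity
  have ha1 : a < 1 := by
    rw [hadef]
    apply inv_lt_one_of_one_lt₀
    have : (1:ℝ) ≤ (m:ℝ) := by exact_mod_cast hm
    linarith
  have hXT : Tendsto (fun R : ℝ => lam * R ^ (m+1)) atTop atTop :=
    (tendsto_pow_atTop (Nat.succ_ne_zero m)).const_mul_atTop hlam
  have base := (halfline_tendsto ha ha1).comp hXT
  have base2 := base.const_mul (((a * lam ^ (-a) : ℝ)) : ℂ)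
  have heq : (((Real.Gamma (((m:ℝ)+2)/((m:ℝ)+1)) * lam ^ (-(1:ℝ)/((m:ℝ)+1)) : ℝ) : ℂ) *
        Complex.exp (Complex.I * (((Real.pi / (2*((m:ℝ)+1)) : ℝ)) : ℂ)))
      = (((a * lam ^ (-a) : ℝ)) : ℂ) *
        (Complex.exp (Complex.I * (Real.pi * a / 2)) * ((Real.Gamma a : ℝ) : ℂ)) := by
    have hG : Real.Gamma (((m:ℝ)+2)/((m:ℝ)+1)) = a * Real.Gamma a := by
      rw [show ((m:ℝ)+2)/((m:ℝ)+1) = a + 1 by rw [hadef]; field_simp; ring]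
      exact Real.Gamma_add_one ha.ne'
    have hexp : -(1:ℝ)/((m:ℝ)+1) = -a := by rw [hadef]; ring
    have hangle : (Real.pi / (2*((m:ℝ)+1)) : ℝ) = Real.pi * a / 2 := by
      rw [hadef]
      field_simp
    rw [hG, hexp, hangle]
    push_cast
    ring
  rw [heq]
  apply base2.congr'
  filter_upwards [eventually_gt_atTop (0:ℝ)] with R hR
  exact (subst_eq hlam hR).symm

lemma intervalIntegral_conj {f : ℝ → ℂ} {x y : ℝ} :
    (∫ t in x..y, (starRingEnd ℂ) (f t)) = (starRingEnd ℂ) (∫ t in x..y, f t) := by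
  simp only [intervalIntegral]
  rw [integral_conj, integral_conj, ← map_sub]

lemma main_neg {m : ℕ} (hm : 1 ≤ m) {lam : ℝ} (hlam : lam < 0) :
    Tendsto (fun R : ℝ => ∫ t in (0:ℝ)..R, Complex.exp (Complex.I * ((lam:ℂ) * (t:ℂ) ^ (m+1))))
      atTop (nhds (((Real.Gamma (((m:ℝ)+2)/((m:ℝ)+1)) * (-lam) ^ (-(1:ℝ)/((m:ℝ)+1)) : ℝ) : ℂ) *
        Complex.exp (-(Complex.I * (((Real.pi / (2*((m:ℝ)+1)) : ℝ)) : ℂ))))) := by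
  have h := main_pos hm (neg_pos.mpr hlam)
  have hconj := ((Complex.continuous_conj.tendsto _).comp h)
  have heq : ∀ R : ℝ, (starRingEnd ℂ) (∫ t in (0:ℝ)..R,
        Complex.exp (Complex.I * (((-lam : ℝ):ℂ) * (t:ℂ) ^ (m+1))))
      = ∫ t in (0:ℝ)..R, Complex.exp (Complex.I * ((lam:ℂ) * (t:ℂ) ^ (m+1))) := by
    intro R
    rw [← intervalIntegral_conj]
    apply intervalIntegral.integral_congr
    intro t _
    beta_reduce
    rw [← Complex.exp_conj]
    congr 1
    simp only [map_mul, Complex.conj_I, map_pow, Complex.conj_ofReal]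
    push_cast
    ring
  have hval : (starRingEnd ℂ) (((Real.Gamma (((m:ℝ)+2)/((m:ℝ)+1)) * (-lam) ^ (-(1:ℝ)/((m:ℝ)+1)) : ℝ) : ℂ) *
        Complex.exp (Complex.I * (((Real.pi / (2*((m:ℝ)+1)) : ℝ)) : ℂ)))
      = (((Real.Gamma (((m:ℝ)+2)/((m:ℝ)+1)) * (-lam) ^ (-(1:ℝ)/((m:ℝ)+1)) : ℝ) : ℂ) *
        Complex.exp (-(Complex.I * (((Real.pi / (2*((m:ℝ)+1)) : ℝ)) : ℂ)))) := by
    rw [map_mul, Complex.conj_ofReal, ← Complex.exp_conj]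
    congr 2
    simp only [map_mul, Complex.conj_I, Complex.conj_ofReal]
    ring
  rw [← hval]
  apply hconj.congr
  intro R
  exact heq R

/-- Generalized Fresnel integrals: for an integer `m ≥ 1` and `λ ≠ 0`,
`lim_{R→∞} ∫_0^R e^{iλ t^{m+1}} dt = Γ((m+2)/(m+1)) |λ|^{-1/(m+1)} e^{i sgn(λ) π/(2(m+1))}`,
and when `m` is even,
`lim_{R→∞} ∫_{-R}^R e^{iλ t^{m+1}} dt = 2 cos(π/(2(m+1))) Γ((m+2)/(m+1)) |λ|^{-1/(m+1)}`. -/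
theorem stmt_2 (m : ℕ) (hm : 1 ≤ m) (l : ℝ) (hl : l ≠ 0) :
    Tendsto (fun R : ℝ => ∫ t in (0:ℝ)..R, Complex.exp (Complex.I * (l * t ^ (m + 1))))
      atTop
      (nhds (((Real.Gamma (((m : ℝ) + 2) / ((m : ℝ) + 1)) *
          |l| ^ (-(1:ℝ)/((m:ℝ)+1)) : ℝ) : ℂ) *
        Complex.exp (Complex.I * ((Real.sign l * Real.pi) / (2 * ((m : ℝ) + 1)))))) ∧
    (Even m →
      Tendsto (fun R : ℝ => ∫ t in (-R)..R, Complex.exp (Complex.I * (l * t ^ (m + 1))))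
        atTop
        (nhds ((2 * Real.cos (Real.pi / (2 * ((m : ℝ) + 1))) *
          Real.Gamma (((m : ℝ) + 2) / ((m : ℝ) + 1)) *
          |l| ^ (-(1:ℝ)/((m:ℝ)+1)) : ℝ) : ℂ))) := by
  have hpart1 : Tendsto (fun R : ℝ => ∫ t in (0:ℝ)..R, Complex.exp (Complex.I * (l * t ^ (m + 1))))
      atTop
      (nhds (((Real.Gamma (((m : ℝ) + 2) / ((m : ℝ) + 1)) *
          |l| ^ (-(1:ℝ)/((m:ℝ)+1)) : ℝ) : ℂ) *
        Complex.exp (Complex.I * ((Real.sign l * Real.pi) / (2 * ((m : ℝ) + 1)))))) := by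
    rcases hl.lt_or_gt with hneg | hpos
    · have h := main_neg hm hneg
      have hsign : Real.sign l = -1 := Real.sign_of_neg hneg
      have habs : |l| = -l := abs_of_neg hneg
      have hc : (((Real.Gamma (((m : ℝ) + 2) / ((m : ℝ) + 1)) *
            |l| ^ (-(1:ℝ)/((m:ℝ)+1)) : ℝ) : ℂ) *
          Complex.exp (Complex.I * ((Real.sign l * Real.pi) / (2 * ((m : ℝ) + 1)))))
          = (((Real.Gamma (((m:ℝ)+2)/((m:ℝ)+1)) * (-l) ^ (-(1:ℝ)/((m:ℝ)+1)) : ℝ) : ℂ) *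
            Complex.exp (-(Complex.I * (((Real.pi / (2*((m:ℝ)+1)) : ℝ)) : ℂ)))) := by
        rw [habs, hsign]
        congr 1
        congr 1
        push_cast
        ring
      rw [hc]
      exact h
    · have h := main_pos hm hpos
      have hsign : Real.sign l = 1 := Real.sign_of_pos hpos
      have habs : |l| = l := abs_of_pos hpos
      have hc : (((Real.Gamma (((m : ℝ) + 2) / ((m : ℝ) + 1)) *
            |l| ^ (-(1:ℝ)/((m:ℝ)+1)) : ℝ) : ℂ) *
          Complex.exp (Complex.I * ((Real.sign l * Real.pi) / (2 * ((m : ℝ) + 1)))))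
          = (((Real.Gamma (((m:ℝ)+2)/((m:ℝ)+1)) * l ^ (-(1:ℝ)/((m:ℝ)+1)) : ℝ) : ℂ) *
            Complex.exp (Complex.I * (((Real.pi / (2*((m:ℝ)+1)) : ℝ)) : ℂ))) := by
        rw [habs, hsign]
        congr 1
        congr 1
        push_cast
        ring
      rw [hc]
      exact h
  refine ⟨hpart1, fun hev => ?_⟩
  have hodd : Odd (m+1) := Even.add_one hev
  have hcont : Continuous (fun t : ℝ => Complex.exp (Complex.I * (l * t ^ (m + 1)))) := by
    apply Complex.continuous_exp.comp
    fun_prop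
  have hsplit : ∀ R : ℝ, (∫ t in (-R)..R, Complex.exp (Complex.I * (l * t ^ (m + 1))))
      = (starRingEnd ℂ) (∫ t in (0:ℝ)..R, Complex.exp (Complex.I * (l * t ^ (m + 1))))
        + ∫ t in (0:ℝ)..R, Complex.exp (Complex.I * (l * t ^ (m + 1))) := by
    intro R
    rw [← intervalIntegral.integral_add_adjacent_intervals
      (hcont.intervalIntegrable (-R) 0) (hcont.intervalIntegrable 0 R)]
    congr 1
    rw [← _root_.intervalIntegral_conj]
    rw [show (∫ t in (-R)..(0:ℝ), Complex.exp (Complex.I * (l * t ^ (m + 1))))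
        = ∫ t in (0:ℝ)..R, Complex.exp (Complex.I * (l * (-t : ℝ) ^ (m + 1))) by
      rw [intervalIntegral.integral_comp_neg
        (f := fun t : ℝ => Complex.exp (Complex.I * (l * t ^ (m + 1))))]
      norm_num]
    apply intervalIntegral.integral_congr
    intro t _
    beta_reduce
    rw [← Complex.exp_conj]
    congr 1
    simp only [map_mul, Complex.conj_I, map_pow, Complex.conj_ofReal]
    push_cast
    rw [Odd.neg_pow hodd]
    ring
  have hlim := ((Complex.continuous_conj.tendsto _).comp hpart1).add hpart1
  have hfinal : (starRingEnd ℂ) (((Real.Gamma (((m : ℝ) + 2) / ((m : ℝ) + 1)) *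
          |l| ^ (-(1:ℝ)/((m:ℝ)+1)) : ℝ) : ℂ) *
        Complex.exp (Complex.I * ((Real.sign l * Real.pi) / (2 * ((m : ℝ) + 1)))))
      + (((Real.Gamma (((m : ℝ) + 2) / ((m : ℝ) + 1)) *
          |l| ^ (-(1:ℝ)/((m:ℝ)+1)) : ℝ) : ℂ) *
        Complex.exp (Complex.I * ((Real.sign l * Real.pi) / (2 * ((m : ℝ) + 1)))))
      = ((2 * Real.cos (Real.pi / (2 * ((m : ℝ) + 1))) *
          Real.Gamma (((m : ℝ) + 2) / ((m : ℝ) + 1)) *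
          |l| ^ (-(1:ℝ)/((m:ℝ)+1)) : ℝ) : ℂ) := by
    set θ : ℝ := Real.sign l * Real.pi / (2 * ((m:ℝ)+1)) with hθ
    have harg : Complex.I * ((Real.sign l * Real.pi : ℂ) / (2 * ((m : ℂ) + 1))) = (θ:ℂ) * Complex.I := by
      rw [hθ]
      push_cast
      ring
    have hcos : Real.cos θ = Real.cos (Real.pi / (2 * ((m:ℝ)+1))) := by
      rcases hl.lt_or_gt with hneg | hpos
      · rw [hθ, Real.sign_of_neg hneg]
        rw [show (-1 : ℝ) * Real.pi / (2 * ((m:ℝ)+1)) = -(Real.pi / (2 * ((m:ℝ)+1))) by ring]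
        exact Real.cos_neg _
      · rw [hθ, Real.sign_of_pos hpos]
        ring_nf
    rw [show Complex.I * ((Real.sign l * Real.pi) / (2 * ((m : ℝ) + 1)) : ℂ) = (θ:ℂ) * Complex.I from harg]
    rw [map_mul, Complex.conj_ofReal, ← Complex.exp_conj]
    rw [show (starRingEnd ℂ) ((θ:ℂ) * Complex.I) = (-θ : ℝ) * Complex.I by
      simp [Complex.conj_ofReal]]
    rw [Complex.exp_mul_I, Complex.exp_mul_I]
    rw [← Complex.ofReal_cos, ← Complex.ofReal_sin, ← Complex.ofReal_cos, ← Complex.ofReal_sin]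
    rw [Real.cos_neg, Real.sin_neg, hcos]
    push_cast
    ring
  rw [← hfinal]
  apply hlim.congr
  intro R
  exact (hsplit R).symm
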